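/- arXiv:1802.07646 — 3 statements merged into one kernel-verified Lean document; each statement's English description precedes it below -/
import Mathlib

section
/- Let G be a finite non-cyclic nilpotent group whose order is divisible by r ≥ 2 distinct primes p1 < ··· < pr, with Sylow subgroups P1, …, Pr. Let X be a cut-set of the power graph P(G) that contains no Sylow subgroup of G, and let (A, B) be a separation of P(G \ X). If P(M \ X) is connected for every maximal cyclic subgroup M of G, then for all 1 ≤ i ≠ j ≤ r, the sets Pi \ X and Pj \ X are either both contained in A or both contained in B. -/
/-!
Elements `x ∈ Pᵢ` and `y ∈ Pⱼ` of distinct Sylow subgroups of a nilpotent group commute and have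
coprime orders, so both are powers of `x * y`. Hence `x` and `y` lie in a common maximal cyclic
subgroup `M`; since `P(M \ X)` is connected, it lies on one side of the separation, and so do `x`
and `y`. Choosing `x₀ ∈ Pᵢ \ X` and `y₀ ∈ Pⱼ \ X` as pivots puts all of `Pᵢ \ X` and `Pⱼ \ X` on
the side of `x₀`.
-/

/-- The power graph of a group `G`. -/
def powerGraph (G : Type*) [Group G] : SimpleGraph G where
  Adj x y := x ≠ y ∧ (x ∈ Subgroup.zpowers y ∨ y ∈ Subgroup.zpowers x)
  symm := ⟨fun x y h => ⟨h.1.symm, h.2.symm⟩⟩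
  loopless := ⟨fun x h => h.1 rfl⟩

/-- `X` is a (vertex) cut-set of the power graph of `G`:
removing `X` leaves a disconnected induced subgraph. -/
def IsCutSet {G : Type*} [Group G] (X : Set G) : Prop :=
  ¬ ((powerGraph G).induce Xᶜ).Preconnected

/-- `X` is a minimal cut-set of the power graph of `G`. -/
def IsMinimalCutSet {G : Type*} [Group G] (X : Set G) : Prop :=
  IsCutSet X ∧ ∀ x ∈ X, ¬ IsCutSet (X \ {x})

/-- `X` is a minimum cut-set of the power graph of `G`. -/
def IsMinimumCutSet {G : Type*} [Group G] (X : Set G) : Prop :=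
  IsCutSet X ∧ ∀ Y : Set G, IsCutSet Y → X.ncard ≤ Y.ncard

/-- The vertex connectivity of the power graph of `G`: the least number of vertices
whose removal disconnects the graph or leaves only one vertex. -/
noncomputable def kappa (G : Type*) [Group G] : ℕ :=
  sInf {m | ∃ X : Set G, X.ncard = m ∧ (IsCutSet X ∨ Xᶜ.ncard = 1)}

/-- `M` is a maximal cyclic subgroup of `G`: cyclic and not properly contained
in any cyclic subgroup. -/
def IsMaxCyclic {G : Type*} [Group G] (M : Subgroup G) : Prop :=
  (∃ x : G, M = Subgroup.zpowers x) ∧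
    ∀ N : Subgroup G, (∃ y : G, N = Subgroup.zpowers y) → M ≤ N → M = N

/-- The set of non-generators of a (cyclic) subgroup `M` of `G`. -/
def nonGens {G : Type*} [Group G] (M : Subgroup G) : Set G :=
  {x | x ∈ M ∧ Subgroup.zpowers x ≠ M}

/-- `Mbar M` is the union of the sets `M ∩ ⟨y⟩` over all `y ∈ G \ M`. -/
def Mbar {G : Type*} [Group G] (M : Subgroup G) : Set G :=
  ⋃ y ∈ (M : Set G)ᶜ, ((M : Set G) ∩ (Subgroup.zpowers y : Set G))

/-- `(A, B)` is a separation of the induced subgraph of the power graph of `G` on `S`. -/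
def IsSeparationOn {G : Type*} [Group G] (S A B : Set G) : Prop :=
  A.Nonempty ∧ B.Nonempty ∧ Disjoint A B ∧ A ∪ B = S ∧
    ∀ a ∈ A, ∀ b ∈ B, ¬ (powerGraph G).Adj a b

open Subgroup

theorem SimpleGraph.mem_iff_mem_of_induce_preconnected {V : Type*} {Γ : SimpleGraph V}
    {S A B : Set V} (hS : (Γ.induce S).Preconnected) (hSAB : S ⊆ A ∪ B)
    (hsep : ∀ a ∈ A, ∀ b ∈ B, ¬ Γ.Adj a b) {x y : V} (hx : x ∈ S) (hy : y ∈ S) :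
    x ∈ A ↔ y ∈ A := by
  suffices ∀ {u v : S}, (Γ.induce S).Walk u v → ((u : V) ∈ A ↔ (v : V) ∈ A) from
    this (hS ⟨x, hx⟩ ⟨y, hy⟩).some
  intro u v w
  induction w with
  | nil => rfl
  | @cons u v _ huv _ ih =>
    refine Iff.trans ⟨fun hu => ?_, fun hv => ?_⟩ ih
    · by_contra hv
      exact hsep _ hu _ ((hSAB v.2).resolve_left hv) huv
    · by_contra hu
      exact hsep _ hv _ ((hSAB u.2).resolve_left hu) huv.symm

theorem Set.subset_and_subset_or_of_forall_mem_iff {α : Type*} {S T A B : Set α}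
    (hS : S.Nonempty) (hT : T.Nonempty) (hSAB : S ⊆ A ∪ B) (hTAB : T ⊆ A ∪ B)
    (h : ∀ x ∈ S, ∀ y ∈ T, x ∈ A ↔ y ∈ A) :
    (S ⊆ A ∧ T ⊆ A) ∨ (S ⊆ B ∧ T ⊆ B) := by
  obtain ⟨x₀, hx₀⟩ := hS
  obtain ⟨y₀, hy₀⟩ := hT
  by_cases hA : x₀ ∈ A
  · exact .inl ⟨fun x hx => (h x hx y₀ hy₀).2 ((h x₀ hx₀ y₀ hy₀).1 hA),
      fun y hy => (h x₀ hx₀ y hy).1 hA⟩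
  · refine .inr ⟨fun x hx => (hSAB hx).resolve_left fun hxA => hA ?_,
      fun y hy => (hTAB hy).resolve_left fun hyA => hA ((h x₀ hx₀ y hy).2 hyA)⟩
    exact (h x₀ hx₀ y₀ hy₀).2 ((h x hx y₀ hy₀).1 hxA)

theorem mem_zpowers_mul_of_coprime {G : Type*} [Group G] {x y : G} (hxy : Commute x y)
    (hcop : (orderOf x).Coprime (orderOf y)) : x ∈ zpowers (x * y) := by
  obtain ⟨m, hm⟩ := exists_pow_eq_self_of_coprime hcop.symm
  have hpow : (x * y) ^ orderOf y = x ^ orderOf y := by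
    rw [hxy.mul_pow, pow_orderOf_eq_one, mul_one]
  have hmem : (x ^ orderOf y) ^ m ∈ zpowers (x * y) := by
    rw [← hpow]
    exact pow_mem (pow_mem (mem_zpowers _) _) _
  rwa [hm] at hmem

theorem IsPGroup.coprime_orderOf_of_ne {G : Type*} [Group G] {p q : ℕ} (hp : p.Prime)
    (hq : q.Prime) (hpq : p ≠ q) {H K : Subgroup G} (hH : IsPGroup p H) (hK : IsPGroup q K)
    {x y : G} (hx : x ∈ H) (hy : y ∈ K) : (orderOf x).Coprime (orderOf y) := by
  have hyp : (orderOf y).Coprime p := by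
    simpa using hK.orderOf_coprime ((Nat.coprime_primes hq hp).2 hpq.symm) ⟨y, hy⟩
  simpa using hH.orderOf_coprime hyp.symm ⟨x, hx⟩

theorem Group.IsNilpotent.mem_zpowers_mul_of_mem_sylow {G : Type*} [Group G] [Finite G]
    (hG : Group.IsNilpotent G) {p q : ℕ} [Fact p.Prime] [Fact q.Prime] (hpq : p ≠ q)
    (P : Sylow p G) (Q : Sylow q G) {x y : G} (hx : x ∈ P) (hy : y ∈ Q) :
    x ∈ zpowers (x * y) ∧ y ∈ zpowers (x * y) := by
  have hnormal {r : ℕ} [Fact r.Prime] (R : Sylow r G) : (R : Subgroup G).Normal :=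
    Sylow.normal_of_normalizerCondition (normalizerCondition_of_isNilpotent (h := hG)) R
  have hxy : Commute x y := commute_of_normal_of_disjoint _ _ (hnormal P) (hnormal Q)
    (IsPGroup.disjoint_of_ne p q hpq _ _ P.isPGroup' Q.isPGroup') x y hx hy
  have hcop := IsPGroup.coprime_orderOf_of_ne (Fact.out : p.Prime) (Fact.out : q.Prime) hpq
    P.isPGroup' Q.isPGroup' hx hy
  refine ⟨mem_zpowers_mul_of_coprime hxy hcop, ?_⟩
  rw [hxy.eq]
  exact mem_zpowers_mul_of_coprime hxy.symm hcop.symm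

theorem exists_isMaxCyclic_zpowers_le {G : Type*} [Group G] [Finite G] (z : G) :
    ∃ M : Subgroup G, IsMaxCyclic M ∧ zpowers z ≤ M := by
  obtain ⟨M, ⟨hMcyc, hzM⟩, hmax⟩ := Set.Finite.exists_maximalFor id
    {N : Subgroup G | (∃ w, N = zpowers w) ∧ zpowers z ≤ N} (Set.toFinite _)
    ⟨zpowers z, ⟨z, rfl⟩, le_rfl⟩
  exact ⟨M, ⟨hMcyc, fun N hN hMN => le_antisymm hMN (hmax ⟨hN, hzM.trans hMN⟩ hMN)⟩, hzM⟩

theorem statement_13_general {G : Type*} [Group G] [Fintype G]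
    (hnil : Group.IsNilpotent G)
    (r : ℕ) (p : Fin r → ℕ) (hp : ∀ i, (p i).Prime)
    (hmono : StrictMono p)
    (P : ∀ i, Sylow (p i) G)
    (X : Set G)
    (hXP : ∀ i, ¬ (((P i : Subgroup G) : Set G) ⊆ X))
    (A B : Set G) (hAB : IsSeparationOn Xᶜ A B)
    (hcon : ∀ M : Subgroup G, IsMaxCyclic M →
      ((powerGraph G).induce ((M : Set G) \ X)).Connected) :
    ∀ i j : Fin r, i ≠ j →
      ((((P i : Subgroup G) : Set G) \ X ⊆ A ∧ ((P j : Subgroup G) : Set G) \ X ⊆ A) ∨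
       (((P i : Subgroup G) : Set G) \ X ⊆ B ∧ ((P j : Subgroup G) : Set G) \ X ⊆ B)) := by
  obtain ⟨-, -, -, hABX, hsep⟩ := hAB
  have hcovered (S : Set G) : S \ X ⊆ A ∪ B := hABX ▸ fun _ h => h.2
  intro i j hij
  have : Fact (p i).Prime := ⟨hp i⟩
  have : Fact (p j).Prime := ⟨hp j⟩
  refine Set.subset_and_subset_or_of_forall_mem_iff (Set.sdiff_nonempty.2 (hXP i))
    (Set.sdiff_nonempty.2 (hXP j)) (hcovered _) (hcovered _) ?_
  rintro x ⟨hxP, hxX⟩ y ⟨hyP, hyX⟩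
  obtain ⟨hx, hy⟩ := hnil.mem_zpowers_mul_of_mem_sylow (hmono.injective.ne hij) _ _ hxP hyP
  obtain ⟨M, hM, hxyM⟩ := exists_isMaxCyclic_zpowers_le (x * y)
  exact SimpleGraph.mem_iff_mem_of_induce_preconnected (hcon M hM).preconnected (hcovered _)
    hsep ⟨hxyM hx, hxX⟩ ⟨hxyM hy, hyX⟩

/-- Proposition (contain): `G` finite non-cyclic nilpotent of order `∏ pᵢ^{nᵢ}` (`r ≥ 2`),
`X` a cut-set of `P(G)` containing no Sylow subgroup, `(A, B)` a separation of `P(G \ X)`.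
If `P(M \ X)` is connected for every maximal cyclic subgroup `M`, then for `i ≠ j` the sets
`P i \ X` and `P j \ X` are both contained in `A` or both contained in `B`. -/
theorem statement_13 {G : Type*} [Group G] [Fintype G]
    (hnil : Group.IsNilpotent G) (hnc : ¬ IsCyclic G)
    (r : ℕ) (hr : 2 ≤ r) (p n : Fin r → ℕ) (hp : ∀ i, (p i).Prime)
    (hmono : StrictMono p) (hn : ∀ i, 1 ≤ n i)
    (hcard : Nat.card G = ∏ i, p i ^ n i)
    (P : ∀ i, Sylow (p i) G)
    (X : Set G) (hX : IsCutSet X)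
    (hXP : ∀ i, ¬ (((P i : Subgroup G) : Set G) ⊆ X))
    (A B : Set G) (hAB : IsSeparationOn Xᶜ A B)
    (hcon : ∀ M : Subgroup G, IsMaxCyclic M →
      ((powerGraph G).induce ((M : Set G) \ X)).Connected) :
    ∀ i j : Fin r, i ≠ j →
      ((((P i : Subgroup G) : Set G) \ X ⊆ A ∧ ((P j : Subgroup G) : Set G) \ X ⊆ A) ∨
       (((P i : Subgroup G) : Set G) \ X ⊆ B ∧ ((P j : Subgroup G) : Set G) \ X ⊆ B)) :=
  statement_13_general hnil r p hp hmono P X hXP A B hAB hcon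
end

section
/- Let G be a finite nilpotent group having at least two non-cyclic Sylow subgroups. Then for every maximal cyclic subgroup M of G, the induced subgraph P(G \ M) of the power graph is connected; consequently, G \ M and M \ M̃ are exactly the two connected components of P(G \ M̃). -/
/-! Every element outside a subgroup `H` has a power of prime-power order outside `H`: if the
order splits as `a * b` with `a, b` coprime, Bézout writes `x` through `x ^ a` and `x ^ b`. In a
finite nilpotent group, elements `u, v` of prime-power orders for distinct primes commute, so both
are powers of `u * v`, and `u – u * v – v` is a path avoiding `H` whenever `u, v ∉ H`. A Sylow
subgroup not contained in `H` supplies such an element for its prime; with two primes available,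
every vertex of `P(G \ H)` reaches a fixed one. For a maximal cyclic `M` this applies, since
`M` contains no non-cyclic subgroup; a generator of `M` is adjacent to no vertex outside `M` by
maximality, and the generators of `M` are pairwise adjacent. -/

open Subgroup SimpleGraph

section Group

variable {G : Type*} [Group G]

lemma Subgroup.pow_notMem_or_pow_notMem {H : Subgroup G} {x : G} {a b : ℕ} (hab : a.Coprime b)
    (hx : x ∉ H) : x ^ a ∉ H ∨ x ^ b ∉ H := by
  by_contra! h
  obtain ⟨s, t, hst⟩ := Nat.isCoprime_iff_coprime.mpr hab
  have hx_eq : x = (x ^ a) ^ s * (x ^ b) ^ t := by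
    rw [← zpow_natCast, ← zpow_natCast, ← zpow_mul, ← zpow_mul, ← zpow_add, mul_comm (a : ℤ),
      mul_comm (b : ℤ), hst, zpow_one]
  exact hx (hx_eq ▸ H.mul_mem (H.zpow_mem h.1 s) (H.zpow_mem h.2 t))

lemma Subgroup.exists_mem_zpowers_notMem_orderOf_eq_prime_pow (H : Subgroup G) {x : G}
    (hx : IsOfFinOrder x) (hxH : x ∉ H) :
    ∃ y ∈ zpowers x, y ∉ H ∧ ∃ p k : ℕ, p.Prime ∧ orderOf y = p ^ k := by
  induction h : orderOf x using Nat.recOnPosPrimePosCoprime generalizing x with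
  | zero => exact absurd h hx.orderOf_pos.ne'
  | one => exact absurd (orderOf_eq_one_iff.mp h ▸ H.one_mem) hxH
  | prime_pow p k hp _ => exact ⟨x, mem_zpowers x, hxH, p, k, hp, h⟩
  | coprime a b ha hb hab iha ihb =>
    have hord (m n : ℕ) (hm : 1 < m) (hmn : orderOf x = m * n) : orderOf (x ^ m) = n := by
      rw [orderOf_pow_of_dvd (by omega) (hmn ▸ dvd_mul_right m n), hmn,
        Nat.mul_div_cancel_left n (by omega)]
    have hpow_le (m : ℕ) : zpowers (x ^ m) ≤ zpowers x :=
      zpowers_le.mpr (pow_mem (mem_zpowers x) m)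
    rcases H.pow_notMem_or_pow_notMem hab hxH with hxa | hxb
    · obtain ⟨y, hy, hyH, hyp⟩ := ihb hx.pow hxa (hord a b ha h)
      exact ⟨y, hpow_le a hy, hyH, hyp⟩
    · obtain ⟨y, hy, hyH, hyp⟩ := iha hx.pow hxb (hord b a hb (h.trans (mul_comm a b)))
      exact ⟨y, hpow_le b hy, hyH, hyp⟩

lemma Commute.mem_zpowers_mul_of_coprime {u v : G} (h : Commute u v)
    (hco : (orderOf u).Coprime (orderOf v)) : u ∈ zpowers (u * v) := by
  obtain ⟨m, hm⟩ := exists_pow_eq_self_of_coprime hco.symm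
  refine mem_zpowers_iff.mpr ⟨((orderOf v * m : ℕ) : ℤ), ?_⟩
  rw [zpow_natCast, pow_mul, h.mul_pow, pow_orderOf_eq_one, mul_one, hm]

lemma commute_of_orderOf_eq_prime_pow [Finite G] [Group.IsNilpotent G] {p r a b : ℕ}
    (hp : p.Prime) (hr : r.Prime) (hpr : p ≠ r) {u v : G} (hu : orderOf u = p ^ a)
    (hv : orderOf v = r ^ b) : Commute u v := by
  have := Fact.mk hp
  have := Fact.mk hr
  obtain ⟨P, hP⟩ := (IsPGroup.of_card (p := p) (G := zpowers u)
    (by rw [Nat.card_zpowers, hu])).exists_le_sylow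
  obtain ⟨Q, hQ⟩ := (IsPGroup.of_card (p := r) (G := zpowers v)
    (by rw [Nat.card_zpowers, hv])).exists_le_sylow
  exact commute_of_normal_of_disjoint _ _ inferInstance inferInstance
    (IsPGroup.disjoint_of_ne p r hpr _ _ P.isPGroup' Q.isPGroup') u v
    (hP (mem_zpowers u)) (hQ (mem_zpowers v))

end Group

section PowerGraph

variable {G : Type*} [Group G]

lemma powerGraph_induce_reachable_of_mem_zpowers {S : Set G} {x y : G} (hx : x ∈ S) (hy : y ∈ S)
    (h : y ∈ zpowers x) : ((powerGraph G).induce S).Reachable ⟨x, hx⟩ ⟨y, hy⟩ := by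
  by_cases hxy : x = y
  · subst hxy
    rfl
  · exact Adj.reachable (show (powerGraph G).Adj x y from ⟨hxy, Or.inr h⟩)

lemma reachable_induce_compl_of_orderOf_eq_prime_pow [Finite G] [Group.IsNilpotent G]
    (H : Subgroup G) {p r a b : ℕ} (hp : p.Prime) (hr : r.Prime) (hpr : p ≠ r) {u v : G}
    (hu : orderOf u = p ^ a) (hv : orderOf v = r ^ b) (huH : u ∉ H) (hvH : v ∉ H) :
    ((powerGraph G).induce (H : Set G)ᶜ).Reachable ⟨u, huH⟩ ⟨v, hvH⟩ := by
  have hcomm := commute_of_orderOf_eq_prime_pow hp hr hpr hu hv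
  have hco : (orderOf u).Coprime (orderOf v) := by
    rw [hu, hv]
    exact ((Nat.coprime_primes hp hr).mpr hpr).pow a b
  have hu_mem : u ∈ zpowers (u * v) := hcomm.mem_zpowers_mul_of_coprime hco
  have hv_mem : v ∈ zpowers (u * v) := hcomm.eq ▸ hcomm.symm.mem_zpowers_mul_of_coprime hco.symm
  have huvH : u * v ∉ H := fun h => huH (zpowers_le.mpr h hu_mem)
  exact (powerGraph_induce_reachable_of_mem_zpowers huvH huH hu_mem).symm.trans
    (powerGraph_induce_reachable_of_mem_zpowers huvH hvH hv_mem)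

theorem connected_induce_compl_of_not_sylow_le [Finite G] [Group.IsNilpotent G] (H : Subgroup G)
    {q₁ q₂ : ℕ} (hq₁ : q₁.Prime) (hq₂ : q₂.Prime) (hne : q₁ ≠ q₂) (P₁ : Sylow q₁ G)
    (P₂ : Sylow q₂ G) (h₁ : ¬ (P₁ : Subgroup G) ≤ H) (h₂ : ¬ (P₂ : Subgroup G) ≤ H) :
    ((powerGraph G).induce (H : Set G)ᶜ).Connected := by
  have := Fact.mk hq₁
  have := Fact.mk hq₂
  obtain ⟨w₁, hw₁P, hw₁H⟩ := SetLike.not_le_iff_exists.mp h₁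
  obtain ⟨w₂, hw₂P, hw₂H⟩ := SetLike.not_le_iff_exists.mp h₂
  obtain ⟨c₁, hw₁⟩ := IsPGroup.iff_orderOf.mp P₁.isPGroup' ⟨w₁, hw₁P⟩
  obtain ⟨c₂, hw₂⟩ := IsPGroup.iff_orderOf.mp P₂.isPGroup' ⟨w₂, hw₂P⟩
  rw [Subgroup.orderOf_mk] at hw₁ hw₂
  have hreach (x : G) (hxH : x ∉ H) :
      ((powerGraph G).induce (H : Set G)ᶜ).Reachable ⟨x, hxH⟩ ⟨w₁, hw₁H⟩ := by
    obtain ⟨y, hyx, hyH, p, k, hp, hy⟩ :=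
      H.exists_mem_zpowers_notMem_orderOf_eq_prime_pow (isOfFinOrder_of_finite x) hxH
    refine (powerGraph_induce_reachable_of_mem_zpowers hxH hyH hyx).trans ?_
    by_cases hpq : p = q₁
    · subst hpq
      exact (reachable_induce_compl_of_orderOf_eq_prime_pow H hp hq₂ hne hy hw₂ hyH hw₂H).trans
        (reachable_induce_compl_of_orderOf_eq_prime_pow H hq₂ hp hne.symm hw₂ hw₁ hw₂H hw₁H)
    · exact reachable_induce_compl_of_orderOf_eq_prime_pow H hp hq₁ hpq hy hw₁ hyH hw₁H
  have : Nonempty ((H : Set G)ᶜ : Set G) := ⟨⟨w₁, hw₁H⟩⟩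
  exact ⟨fun ⟨x, hx⟩ ⟨z, hz⟩ => (hreach x hx).trans (hreach z hz).symm⟩

end PowerGraph

section MaxCyclic

variable {G : Type*} [Group G] {M : Subgroup G}

lemma mem_diff_nonGens_iff {x : G} : x ∈ (M : Set G) \ nonGens M ↔ zpowers x = M := by
  refine ⟨fun ⟨hxM, hx⟩ => not_not.mp fun h => hx ⟨hxM, h⟩, fun h => ⟨?_, fun hx => hx.2 h⟩⟩
  exact h ▸ mem_zpowers x

lemma IsMaxCyclic.isCyclic (hM : IsMaxCyclic M) : IsCyclic M := by
  obtain ⟨g, rfl⟩ := hM.1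
  infer_instance

lemma IsMaxCyclic.not_adj_of_notMem_of_zpowers_eq (hM : IsMaxCyclic M) {a b : G} (ha : a ∉ M)
    (hb : zpowers b = M) : ¬ (powerGraph G).Adj a b := by
  rintro ⟨-, hab | hba⟩
  · exact ha (hb ▸ hab)
  · have hle : M ≤ zpowers a := hb ▸ zpowers_le.mpr hba
    exact ha (hM.2 _ ⟨a, rfl⟩ hle ▸ mem_zpowers a)

lemma IsMaxCyclic.isSeparationOn (hM : IsMaxCyclic M) (hne : ((M : Set G)ᶜ).Nonempty) :
    IsSeparationOn ((nonGens M)ᶜ) ((M : Set G)ᶜ) ((M : Set G) \ nonGens M) := by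
  obtain ⟨g, hg⟩ := hM.1
  refine ⟨hne, ⟨g, mem_diff_nonGens_iff.mpr hg.symm⟩, ?_, ?_, ?_⟩
  · exact Set.disjoint_left.mpr fun a ha hb => ha hb.1
  · ext x
    simp only [nonGens, Set.mem_union, Set.mem_compl_iff, Set.mem_sdiff, Set.mem_ofPred_eq,
      SetLike.mem_coe]
    tauto
  · exact fun a ha b hb => hM.not_adj_of_notMem_of_zpowers_eq ha (mem_diff_nonGens_iff.mp hb)

lemma connected_induce_diff_nonGens (hM : ∃ g, M = zpowers g) :
    ((powerGraph G).induce ((M : Set G) \ nonGens M)).Connected := by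
  obtain ⟨g, hg⟩ := hM
  have : Nonempty ((M : Set G) \ nonGens M : Set G) := ⟨⟨g, mem_diff_nonGens_iff.mpr hg.symm⟩⟩
  refine connected_top.mono ?_
  rintro ⟨x, hx⟩ ⟨y, hy⟩ hxy
  refine ⟨fun h => hxy (Subtype.ext h), Or.inl ?_⟩
  change x ∈ zpowers y
  rw [mem_diff_nonGens_iff.mp hy, ← mem_diff_nonGens_iff.mp hx]
  exact mem_zpowers x

end MaxCyclic

/-- Proposition (all-group1): `G` finite nilpotent with at least two non-cyclic Sylow
subgroups; then for every maximal cyclic subgroup `M`, `P(G \ M)` is connected; consequently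
`G \ M` and `M \ M̃` are exactly the two connected components of `P(G \ M̃)`. -/
theorem statement_14 {G : Type*} [Group G] [Fintype G] (hnil : Group.IsNilpotent G)
    (q₁ q₂ : ℕ) (hq₁ : q₁.Prime) (hq₂ : q₂.Prime) (hne : q₁ ≠ q₂)
    (P₁ : Sylow q₁ G) (P₂ : Sylow q₂ G)
    (hP₁ : ¬ IsCyclic ↥((P₁ : Subgroup G))) (hP₂ : ¬ IsCyclic ↥((P₂ : Subgroup G))) :
    ∀ M : Subgroup G, IsMaxCyclic M →
      ((powerGraph G).induce ((M : Set G)ᶜ)).Connected ∧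
      IsSeparationOn ((nonGens M)ᶜ) ((M : Set G)ᶜ) ((M : Set G) \ nonGens M) ∧
      ((powerGraph G).induce ((M : Set G) \ nonGens M)).Connected := by
  intro M hM
  have := hM.isCyclic
  have hconn : ((powerGraph G).induce ((M : Set G)ᶜ)).Connected :=
    connected_induce_compl_of_not_sylow_le M hq₁ hq₂ hne P₁ P₂
      (fun h => hP₁ (Subgroup.isCyclic_of_le h)) (fun h => hP₂ (Subgroup.isCyclic_of_le h))
  exact ⟨hconn, hM.isSeparationOn (Set.nonempty_coe_sort.mp hconn.nonempty),
    connected_induce_diff_nonGens hM.1⟩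
end

section
/- Let G be a finite nilpotent group having at least two non-cyclic Sylow subgroups. Then for every maximal cyclic subgroup M of G, the set M̄ (the union of the sets M ∩ ⟨y⟩ over all y ∈ G \ M) is a minimal cut-set of the power graph P(G). -/
/-! `M̄` separates `M \ M̄`, which contains every generator of `M`, from `G \ M`: an element of `M`
adjacent to some `y ∉ M` is a power of `y`, hence lies in `M̄`. Each `x ∈ M̄` is adjacent both to a
generator of `M` and to some `y ∉ M`, so putting `x` back reconnects the graph as soon as `G \ M`
is connected. The two non-cyclic Sylow subgroups cannot lie in the cyclic group `M`, which yields
`α, β ∉ M` of coprime prime-power orders. In a nilpotent group, elements `γ, δ` of coprime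
prime-power orders commute, so both are powers of `γδ`, giving a path `γ — γδ — δ` outside `M`.
Every `u ∉ M` has a power `γ ∉ M` of prime-power order, which is joined in this way to `α` or to
`β`. -/

open Subgroup

section Group

variable {G : Type*} [Group G]

theorem Subgroup.mem_of_pow_mem_of_coprime {H : Subgroup G} {g : G} {a b : ℕ}
    (hab : a.Coprime b) (ha : g ^ a ∈ H) (hb : g ^ b ∈ H) : g ∈ H := by
  have hbezout : g = (g ^ a) ^ a.gcdA b * (g ^ b) ^ a.gcdB b := by
    rw [← zpow_natCast, ← zpow_natCast, ← zpow_mul, ← zpow_mul, ← zpow_add,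
      ← Nat.gcd_eq_gcd_ab, hab, Nat.cast_one, zpow_one]
  rw [hbezout]
  exact H.mul_mem (H.zpow_mem ha _) (H.zpow_mem hb _)

theorem Commute.mem_zpowers_mul_left {a b : G} (h : Commute a b)
    (hab : (orderOf a).Coprime (orderOf b)) : a ∈ zpowers (a * b) := by
  obtain ⟨k, hk⟩ := exists_pow_eq_self_of_coprime hab.symm
  have hpow : (a * b) ^ orderOf b = a ^ orderOf b := by
    rw [h.mul_pow, pow_orderOf_eq_one, mul_one]
  have hmem := (zpowers (a * b)).pow_mem (npow_mem_zpowers (a * b) (orderOf b)) k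
  rwa [hpow, hk] at hmem

theorem Commute.mem_zpowers_mul_right {a b : G} (h : Commute a b)
    (hab : (orderOf a).Coprime (orderOf b)) : b ∈ zpowers (a * b) :=
  h.eq ▸ h.symm.mem_zpowers_mul_left hab.symm

theorem IsOfFinOrder.exists_primePow_orderOf_mem_zpowers_notMem {H : Subgroup G} {g : G}
    (hfin : IsOfFinOrder g) (hg : g ∉ H) :
    ∃ γ ∈ zpowers g, γ ∉ H ∧ ∃ p k : ℕ, p.Prime ∧ orderOf γ = p ^ k := by
  suffices ∀ n (g : G), orderOf g = n → 0 < n → g ∉ H →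
      ∃ γ ∈ zpowers g, γ ∉ H ∧ ∃ p k : ℕ, p.Prime ∧ orderOf γ = p ^ k from
    this _ g rfl hfin.orderOf_pos hg
  intro n
  induction n using Nat.recOnPosPrimePosCoprime with
  | prime_pow p k hp _ => exact fun g hg _ hgH => ⟨g, mem_zpowers g, hgH, p, k, hp, hg⟩
  | zero => exact fun _ _ h => absurd h (lt_irrefl 0)
  | one => exact fun g hg _ hgH => absurd (orderOf_eq_one_iff.mp hg ▸ H.one_mem) hgH
  | coprime a b ha hb hab iha ihb =>
    intro g hg _ hgH
    have hga : orderOf (g ^ a) = b := by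
      rw [orderOf_pow_of_dvd (by omega) (hg ▸ dvd_mul_right a b), hg,
        Nat.mul_div_cancel_left _ (by omega)]
    have hgb : orderOf (g ^ b) = a := by
      rw [orderOf_pow_of_dvd (by omega) (hg ▸ dvd_mul_left b a), hg,
        Nat.mul_div_cancel _ (by omega)]
    by_cases hgaH : g ^ a ∈ H
    · have hgbH : g ^ b ∉ H := fun hgbH => hgH (mem_of_pow_mem_of_coprime hab hgaH hgbH)
      obtain ⟨γ, hγ, hγH⟩ := iha (g ^ b) hgb (by omega) hgbH
      exact ⟨γ, zpowers_le.mpr (npow_mem_zpowers g b) hγ, hγH⟩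
    · obtain ⟨γ, hγ, hγH⟩ := ihb (g ^ a) hga (by omega) hgaH
      exact ⟨γ, zpowers_le.mpr (npow_mem_zpowers g a) hγ, hγH⟩

theorem Group.IsNilpotent.commute_of_orderOf_eq_prime_pow [Finite G] (hG : Group.IsNilpotent G)
    {p q : ℕ} (hp : p.Prime) (hq : q.Prime) (hpq : p ≠ q) {a b : G} {i j : ℕ}
    (ha : orderOf a = p ^ i) (hb : orderOf b = q ^ j) : Commute a b := by
  have := Fact.mk hp
  have := Fact.mk hq
  obtain ⟨P, hP⟩ := (IsPGroup.of_card (G := zpowers a) (Nat.card_zpowers a ▸ ha)).exists_le_sylow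
  obtain ⟨Q, hQ⟩ := (IsPGroup.of_card (G := zpowers b) (Nat.card_zpowers b ▸ hb)).exists_le_sylow
  exact commute_of_normal_of_disjoint P Q inferInstance inferInstance
    (IsPGroup.disjoint_of_ne p q hpq _ _ P.isPGroup' Q.isPGroup') a b (hP (mem_zpowers a))
    (hQ (mem_zpowers b))

end Group

section PowerGraph

variable {G : Type*} [Group G]

theorem powerGraph_induce_reachable_of_mem_zpowers_s15 {S : Set G} {a b : G} (ha : a ∈ S)
    (hb : b ∈ S) (hab : a ∈ zpowers b) :
    ((powerGraph G).induce S).Reachable ⟨a, ha⟩ ⟨b, hb⟩ := by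
  by_cases h : a = b
  · subst h
    rfl
  · exact SimpleGraph.Adj.reachable (show (powerGraph G).Adj a b from ⟨h, Or.inl hab⟩)

theorem IsSeparationOn.not_preconnected {S A B : Set G} (h : IsSeparationOn S A B) :
    ¬ ((powerGraph G).induce S).Preconnected := by
  obtain ⟨⟨a, ha⟩, ⟨b, hb⟩, hAB, rfl, hnadj⟩ := h
  intro hconn
  obtain ⟨w⟩ := hconn ⟨a, Or.inl ha⟩ ⟨b, Or.inr hb⟩
  obtain ⟨d, -, hd₁, hd₂⟩ :=
    w.exists_boundary_dart {v | (v : G) ∈ A} ha (Set.disjoint_right.mp hAB hb)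
  exact hnadj _ hd₁ _ (d.snd.2.resolve_left hd₂) d.adj

theorem powerGraph_induce_compl_reachable_of_commute_of_coprime {H : Subgroup G} {a b : G}
    (ha : a ∉ H) (hb : b ∉ H) (hcomm : Commute a b) (hab : (orderOf a).Coprime (orderOf b)) :
    ((powerGraph G).induce (H : Set G)ᶜ).Reachable ⟨a, ha⟩ ⟨b, hb⟩ := by
  have haab := hcomm.mem_zpowers_mul_left hab
  have hab_notMem : a * b ∉ H := fun h => ha (zpowers_le.mpr h haab)
  exact (powerGraph_induce_reachable_of_mem_zpowers_s15 ha hab_notMem haab).trans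
    (powerGraph_induce_reachable_of_mem_zpowers_s15 hb hab_notMem
      (hcomm.mem_zpowers_mul_right hab)).symm

theorem Group.IsNilpotent.powerGraph_induce_compl_reachable_of_orderOf_eq_prime_pow [Finite G]
    (hG : Group.IsNilpotent G) {H : Subgroup G} {p q : ℕ} (hp : p.Prime) (hq : q.Prime)
    (hpq : p ≠ q) {a b : G} {i j : ℕ} (ha : orderOf a = p ^ i) (hb : orderOf b = q ^ j)
    (haH : a ∉ H) (hbH : b ∉ H) :
    ((powerGraph G).induce (H : Set G)ᶜ).Reachable ⟨a, haH⟩ ⟨b, hbH⟩ :=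
  powerGraph_induce_compl_reachable_of_commute_of_coprime haH hbH
    (hG.commute_of_orderOf_eq_prime_pow hp hq hpq ha hb)
    (ha ▸ hb ▸ ((Nat.coprime_primes hp hq).mpr hpq).pow i j)

theorem Group.IsNilpotent.powerGraph_induce_compl_preconnected [Finite G]
    (hG : Group.IsNilpotent G) (H : Subgroup G) {p q : ℕ} (hp : p.Prime) (hq : q.Prime)
    (hpq : p ≠ q) {α β : G} {i j : ℕ} (hα : orderOf α = p ^ i) (hβ : orderOf β = q ^ j)
    (hαH : α ∉ H) (hβH : β ∉ H) :
    ((powerGraph G).induce (H : Set G)ᶜ).Preconnected := by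
  suffices h : ∀ u (hu : u ∉ H), ((powerGraph G).induce (H : Set G)ᶜ).Reachable ⟨u, hu⟩ ⟨α, hαH⟩
    from fun u v => (h u u.2).trans (h v v.2).symm
  intro u hu
  obtain ⟨γ, hγu, hγH, r, k, hr, hγ⟩ :=
    (isOfFinOrder_of_finite u).exists_primePow_orderOf_mem_zpowers_notMem hu
  have hγ_reach :=
    (powerGraph_induce_reachable_of_mem_zpowers_s15 (S := (H : Set G)ᶜ) hγH hu hγu).symm
  by_cases hrp : r = p
  · subst hrp
    exact hγ_reach.trans
      ((hG.powerGraph_induce_compl_reachable_of_orderOf_eq_prime_pow hr hq hpq hγ hβ hγH hβH).trans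
        (hG.powerGraph_induce_compl_reachable_of_orderOf_eq_prime_pow hr hq hpq hα hβ hαH hβH).symm)
  · exact hγ_reach.trans
      (hG.powerGraph_induce_compl_reachable_of_orderOf_eq_prime_pow hr hp hrp hγ hα hγH hαH)

end PowerGraph

section Mbar

variable {G : Type*} [Group G]

theorem mem_Mbar_iff {M : Subgroup G} {x : G} :
    x ∈ Mbar M ↔ x ∈ M ∧ ∃ y ∉ M, x ∈ zpowers y := by
  simp only [Mbar, Set.mem_iUnion, Set.mem_inter_iff, Set.mem_compl_iff, SetLike.mem_coe,
    exists_prop]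
  tauto

theorem Mbar_subset (M : Subgroup G) : Mbar M ⊆ M := fun _ hx => (mem_Mbar_iff.mp hx).1

theorem IsMaxCyclic.generator_notMem_Mbar {M : Subgroup G} (hM : IsMaxCyclic M) {m : G}
    (hm : M = zpowers m) : m ∉ Mbar M := by
  intro hmM
  obtain ⟨-, y, hyM, hmy⟩ := mem_Mbar_iff.mp hmM
  have hMy : M = zpowers y := hM.2 _ ⟨y, rfl⟩ (hm ▸ zpowers_le.mpr hmy)
  exact hyM (hMy ▸ mem_zpowers y)

theorem isCutSet_Mbar {M : Subgroup G} {m a : G} (hm : m ∈ M) (hm' : m ∉ Mbar M) (ha : a ∉ M) :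
    IsCutSet (Mbar M) := by
  refine IsSeparationOn.not_preconnected (A := (M : Set G) \ Mbar M) (B := (M : Set G)ᶜ)
    ⟨⟨m, hm, hm'⟩, ⟨a, ha⟩, disjoint_compl_right.mono_left Set.sdiff_subset, ?_, ?_⟩
  · ext v
    have := @Mbar_subset _ _ M v
    simp only [Set.mem_union, Set.mem_sdiff, Set.mem_compl_iff]
    tauto
  · rintro x ⟨hxM, hx⟩ y hyM ⟨-, hxy | hyx⟩
    · exact hx (mem_Mbar_iff.mpr ⟨hxM, y, hyM, hxy⟩)
    · exact hyM (zpowers_le.mpr hxM hyx)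

theorem not_isCutSet_Mbar_sdiff_singleton {M : Subgroup G} {m x : G} (hm : M = zpowers m)
    (hm' : m ∉ Mbar M) (hconn : ((powerGraph G).induce (M : Set G)ᶜ).Preconnected)
    (hx : x ∈ Mbar M) : ¬ IsCutSet (Mbar M \ {x}) := by
  obtain ⟨hxM, y, hyM, hxy⟩ := mem_Mbar_iff.mp hx
  set S := (Mbar M \ {x})ᶜ
  have hMS : (M : Set G)ᶜ ⊆ S := fun u hu huS => hu (Mbar_subset M huS.1)
  have hxS : x ∈ S := fun h => h.2 rfl
  have hmS : m ∈ S := fun h => hm' h.1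
  suffices h : ∀ v : S, ((powerGraph G).induce S).Reachable v ⟨x, hxS⟩ from
    not_not.mpr fun u v => (h u).trans (h v).symm
  rintro ⟨v, hv⟩
  by_cases hvM : v ∈ M
  · exact (powerGraph_induce_reachable_of_mem_zpowers_s15 hv hmS (hm ▸ hvM)).trans
      (powerGraph_induce_reachable_of_mem_zpowers_s15 hxS hmS (hm ▸ hxM)).symm
  · exact ((hconn ⟨v, hvM⟩ ⟨y, hyM⟩).map ((powerGraph G).induceHomOfLE hMS).toHom).trans
      (powerGraph_induce_reachable_of_mem_zpowers_s15 hxS (hMS hyM) hxy).symm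

end Mbar

/-- Proposition (M-bar-min): `G` finite nilpotent with at least two non-cyclic Sylow
subgroups; then `M̄` is a minimal cut-set of the power graph `P(G)` for every maximal cyclic
subgroup `M` of `G`. -/
theorem statement_15 {G : Type*} [Group G] [Fintype G] (hnil : Group.IsNilpotent G)
    (q₁ q₂ : ℕ) (hq₁ : q₁.Prime) (hq₂ : q₂.Prime) (hne : q₁ ≠ q₂)
    (P₁ : Sylow q₁ G) (P₂ : Sylow q₂ G)
    (hP₁ : ¬ IsCyclic ↥((P₁ : Subgroup G))) (hP₂ : ¬ IsCyclic ↥((P₂ : Subgroup G))) :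
    ∀ M : Subgroup G, IsMaxCyclic M → IsMinimalCutSet (Mbar M) := by
  intro M hM
  obtain ⟨m, hm⟩ := hM.1
  have : IsCyclic M := hm ▸ isCyclic_zpowers m
  obtain ⟨α, hαP, hαM⟩ := SetLike.not_le_iff_exists.mp fun h => hP₁ (isCyclic_of_le (H' := M) h)
  obtain ⟨β, hβP, hβM⟩ := SetLike.not_le_iff_exists.mp fun h => hP₂ (isCyclic_of_le (H' := M) h)
  have := Fact.mk hq₁
  have := Fact.mk hq₂
  obtain ⟨i, hα⟩ := P₁.isPGroup'.exists_orderOf_eq_pow ⟨α, hαP⟩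
  obtain ⟨j, hβ⟩ := P₂.isPGroup'.exists_orderOf_eq_pow ⟨β, hβP⟩
  rw [orderOf_mk] at hα hβ
  have hm' := hM.generator_notMem_Mbar hm
  have hconn := hnil.powerGraph_induce_compl_preconnected M hq₁ hq₂ hne hα hβ hαM hβM
  exact ⟨isCutSet_Mbar (hm ▸ mem_zpowers m) hm' hαM,
    fun x hx => not_isCutSet_Mbar_sdiff_singleton hm hm' hconn hx⟩
end
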